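/- arXiv:2107.09091 — 2 statements merged into one kernel-verified Lean document; each statement's English description precedes it below -/
import Mathlib

section
/- Let ε ≤ 1/3 be such that 2εk and k(1−2ε) are positive integers, and let A ∈ ℝ^{m×n} be a matrix whose entries all lie in [−1, 1]. Let B be the m × n binary matrix with B_{ij} = 1 if A_{ij} ≠ 0 and B_{ij} = 0 otherwise. If B is NOT a (k(1−2ε), 2εk)-list disjunct matrix, then there exist distinct vectors x¹, x² ∈ ℝ^n with ‖x¹‖₀ ≤ k, ‖x²‖₀ ≤ k, and |supp(x¹) ∩ supp(x²)| ≤ k(1−2ε) such that sign(Ax¹) = sign(Ax²). -/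
/-- The support of a vector `x : Fin n → ℝ` as a `Finset`. -/
noncomputable def suppF {n : ℕ} (x : Fin n → ℝ) : Finset (Fin n) :=
  Finset.univ.filter (fun i => x i ≠ 0)

/-- The coordinatewise sign of the measurement `A x`. -/
noncomputable def signVec {m n : ℕ} (A : Matrix (Fin m) (Fin n) ℝ) (x : Fin n → ℝ) :
    Fin m → ℝ := fun i => Real.sign (A.mulVec x i)

/-- An `m × n` binary matrix `M` is `(k, ℓ)`-list disjunct if for every pair of disjoint
sets `S`, `T` of columns with `|S| = ℓ` and `|T| = k`, there is a row in which some column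
from `S` has a one while every column from `T` has a zero. -/
def ListDisjunct {m n : ℕ} (M : Matrix (Fin m) (Fin n) Bool) (k ℓ : ℕ) : Prop :=
  ∀ S T : Finset (Fin n), Disjoint S T → S.card = ℓ → T.card = k →
    ∃ r : Fin m, (∃ j ∈ S, M r j = true) ∧ (∀ j ∈ T, M r j = false)

lemma sign_add_of_abs_lt {a b : ℝ} (h : |b| < |a|) :
    Real.sign (a + b) = Real.sign a := by
  rcases lt_trichotomy a 0 with ha | ha | ha
  · have hb : b < -a := by
      have := (abs_lt.mp h).2
      rwa [abs_of_neg ha] at this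
    rw [Real.sign_of_neg ha, Real.sign_of_neg (by linarith)]
  · subst ha; simp at h; exact absurd h (not_lt.mpr (abs_nonneg b))
  · have hb : -a < b := by
      have := (abs_lt.mp h).1
      rwa [abs_of_pos ha] at this
    rw [Real.sign_of_pos ha, Real.sign_of_pos (by linarith)]

lemma exists_generic {m n : ℕ} (A : Matrix (Fin m) (Fin n) ℝ) (T : Finset (Fin n))
    (R : Finset (Fin m)) (hR : ∀ r ∈ R, ∃ j ∈ T, A r j ≠ 0) :
    ∃ x : Fin n → ℝ, (∀ j, j ∉ T → x j = 0) ∧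
      ∀ r ∈ R, (∑ j ∈ T, A r j * x j) ≠ 0 := by
  classical
  induction R using Finset.induction with
  | empty => exact ⟨0, fun j _ => rfl, by simp⟩
  | @insert r R hrR ih =>
    obtain ⟨x, hx0, hx⟩ := ih (fun s hs => hR s (Finset.mem_insert_of_mem hs))
    obtain ⟨j, hjT, hAj⟩ := hR r (Finset.mem_insert_self r R)
    set y : Fin n → ℝ := fun i => if i = j then 1 else 0 with hy
    have hSy : ∀ s : Fin m, (∑ i ∈ T, A s i * y i) = A s j := by
      intro s
      rw [hy]
      simp only [mul_ite, mul_one, mul_zero]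
      rw [Finset.sum_ite_eq' T j (fun i => A s i)]
      simp [hjT]
    set bad : Finset ℝ :=
      insert 0 ((insert r R).image fun s =>
        -(∑ i ∈ T, A s i * x i) / (∑ i ∈ T, A s i * y i)) with hbad
    obtain ⟨t, ht⟩ := Infinite.exists_notMem_finset bad
    refine ⟨fun i => x i + t * y i, ?_, ?_⟩
    · intro i hi
      have h1 : x i = 0 := hx0 i hi
      have h2 : y i = 0 := by
        rw [hy]; simp only []
        have : i ≠ j := fun h => hi (h ▸ hjT)
        simp [this]
      simp [h1, h2]
    · intro s hs
      have hsum : (∑ i ∈ T, A s i * (x i + t * y i))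
          = (∑ i ∈ T, A s i * x i) + t * (∑ i ∈ T, A s i * y i) := by
        rw [Finset.mul_sum, ← Finset.sum_add_distrib]
        congr 1; funext i; ring
      rw [hsum]
      intro hzero
      by_cases hSy0 : (∑ i ∈ T, A s i * y i) = 0
      · rw [hSy0, mul_zero, add_zero] at hzero
        rcases Finset.mem_insert.mp hs with rfl | hsR
        · rw [hSy s, ] at hSy0; exact hAj hSy0
        · exact hx s hsR hzero
      · have : t = -(∑ i ∈ T, A s i * x i) / (∑ i ∈ T, A s i * y i) := by
          field_simp at hzero ⊢
          linarith
        apply ht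
        rw [hbad]
        exact Finset.mem_insert_of_mem (this ▸ Finset.mem_image_of_mem _ hs)


/-- If `A ∈ [-1,1]^{m×n}` and the binary pattern matrix `B` of `A` (with `B i j = 1` iff
`A i j ≠ 0`) is not `(k(1-2ε), 2εk)`-list disjunct, then there exist two distinct `k`-sparse
vectors whose supports intersect in at most `k(1-2ε)` coordinates but which produce the same
sign measurements under `A`. Here `k1 = k(1-2ε)` and `l1 = 2εk` are positive integers and
`ε ≤ 1/3`. -/
theorem not_listDisjunct_confusable (k n m k1 l1 : ℕ) (ε : ℝ) (hε : ε ≤ 1 / 3)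
    (hk1 : 0 < k1) (hl1 : 0 < l1)
    (hk1e : (k1 : ℝ) = (k : ℝ) * (1 - 2 * ε)) (hl1e : (l1 : ℝ) = 2 * ε * k)
    (A : Matrix (Fin m) (Fin n) ℝ) (hA : ∀ i j, A i j ∈ Set.Icc (-1 : ℝ) 1)
    (hB : ¬ ListDisjunct
      (Matrix.of (fun i j => if A i j = 0 then false else true)) k1 l1) :
    ∃ x1 x2 : Fin n → ℝ, x1 ≠ x2 ∧
      (suppF x1).card ≤ k ∧ (suppF x2).card ≤ k ∧
      ((suppF x1 ∩ suppF x2).card : ℝ) ≤ (k : ℝ) * (1 - 2 * ε) ∧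
      signVec A x1 = signVec A x2 := by
  classical
  unfold ListDisjunct at hB
  push_neg at hB
  obtain ⟨S, T, hST, hScard, hTcard, hrow⟩ := hB
  -- row dichotomy
  have hdich : ∀ r : Fin m, (∀ j ∈ S, A r j = 0) ∨ (∃ j ∈ T, A r j ≠ 0) := by
    intro r
    by_cases h : ∀ j ∈ S, A r j = 0
    · exact Or.inl h
    · push_neg at h
      obtain ⟨j, hjS, hAj⟩ := h
      right
      obtain ⟨j', hj', hMj'⟩ := hrow r ⟨j, hjS, by simp [Matrix.of_apply, hAj]⟩
      refine ⟨j', hj', ?_⟩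
      intro h0
      simp [Matrix.of_apply, h0] at hMj'
  -- k1 + l1 = k
  have hkk : k1 + l1 = k := by
    have : ((k1 + l1 : ℕ) : ℝ) = (k : ℕ) := by push_cast; rw [hk1e, hl1e]; ring
    exact_mod_cast this
  -- the rows that see T
  set R : Finset (Fin m) := Finset.univ.filter (fun r => ∃ j ∈ T, A r j ≠ 0) with hR
  obtain ⟨x1, hx0, hx⟩ := exists_generic A T R
    (fun r hr => (Finset.mem_filter.mp hr).2)
  -- mulVec x1 over T
  have hmul1 : ∀ r, A.mulVec x1 r = ∑ j ∈ T, A r j * x1 j := by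
    intro r
    rw [Matrix.mulVec, dotProduct]
    rw [← Finset.sum_subset (Finset.subset_univ T)]
    intro i _ hiT
    rw [hx0 i hiT, mul_zero]
  -- the threshold
  set c : ℝ := (insert (1:ℝ) (R.image fun r => |A.mulVec x1 r|)).min'
    (Finset.insert_nonempty _ _) with hc
  have hcpos : 0 < c := by
    have hcmem := Finset.min'_mem (insert (1:ℝ) (R.image fun r => |A.mulVec x1 r|))
      (Finset.insert_nonempty _ _)
    rw [← hc] at hcmem
    rcases Finset.mem_insert.mp hcmem with h1 | h2
    · rw [h1]; norm_num
    · obtain ⟨r, hrR, hre⟩ := Finset.mem_image.mp h2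
      rw [← hre]
      have := hx r hrR
      rw [← hmul1 r] at this
      exact abs_pos.mpr this
  have hcle : ∀ r ∈ R, c ≤ |A.mulVec x1 r| := by
    intro r hrR
    exact Finset.min'_le _ _ (Finset.mem_insert_of_mem (Finset.mem_image_of_mem _ hrR))
  set δ : ℝ := c / (2 * l1) with hδ
  have hδpos : 0 < δ := by
    apply div_pos hcpos
    positivity
  set x2 : Fin n → ℝ := fun i => x1 i + if i ∈ S then δ else 0 with hx2
  refine ⟨x1, x2, ?_, ?_, ?_, ?_, ?_⟩
  · -- x1 ≠ x2
    obtain ⟨j, hjS⟩ := Finset.card_pos.mp (hScard ▸ hl1)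
    intro heq
    have := congrFun heq j
    rw [hx2] at this
    simp [hjS] at this
    exact (ne_of_gt hδpos) this
  · -- card x1
    have hsub : suppF x1 ⊆ T := by
      intro i hi
      simp only [suppF, Finset.mem_filter] at hi
      by_contra hiT
      exact hi.2 (hx0 i hiT)
    calc (suppF x1).card ≤ T.card := Finset.card_le_card hsub
      _ = k1 := hTcard
      _ ≤ k := by omega
  · -- card x2
    have hsub : suppF x2 ⊆ S ∪ T := by
      intro i hi
      simp only [suppF, Finset.mem_filter] at hi
      by_contra hiST
      rw [Finset.mem_union] at hiST
      push_neg at hiST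
      apply hi.2
      rw [hx2]
      simp [hiST.1, hx0 i hiST.2]
    calc (suppF x2).card ≤ (S ∪ T).card := Finset.card_le_card hsub
      _ ≤ S.card + T.card := Finset.card_union_le S T
      _ = k := by omega
  · -- intersection
    have hsub : suppF x1 ∩ suppF x2 ⊆ T := by
      intro i hi
      have := Finset.mem_of_mem_filter i (Finset.mem_of_mem_inter_left hi)
      have hi1 : x1 i ≠ 0 := by
        have := Finset.mem_of_mem_inter_left hi
        simpa [suppF] using this
      by_contra hiT
      exact hi1 (hx0 i hiT)
    have : ((suppF x1 ∩ suppF x2).card : ℝ) ≤ (k1 : ℝ) := by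
      exact_mod_cast hTcard ▸ Finset.card_le_card hsub
    rw [hk1e] at this
    exact this
  · -- signs agree
    funext r
    have hmul2 : A.mulVec x2 r = A.mulVec x1 r + ∑ j ∈ S, A r j * δ := by
      rw [Matrix.mulVec, Matrix.mulVec, dotProduct, dotProduct, hx2]
      simp only [mul_add, Finset.sum_add_distrib]
      congr 1
      rw [← Finset.sum_subset (Finset.subset_univ S)]
      · apply Finset.sum_congr rfl
        intro j hjS
        simp [hjS]
      · intro j _ hjS
        simp [hjS]
    rcases hdich r with hz | hnz
    · have : (∑ j ∈ S, A r j * δ) = 0 :=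
        Finset.sum_eq_zero (fun j hj => by rw [hz j hj, zero_mul])
      simp only [signVec]
      rw [hmul2, this, add_zero]
    · have hrR : r ∈ R := Finset.mem_filter.mpr ⟨Finset.mem_univ r, hnz⟩
      have hb : |∑ j ∈ S, A r j * δ| < |A.mulVec x1 r| := by
        have h1 : |∑ j ∈ S, A r j * δ| ≤ ∑ j ∈ S, |A r j * δ| :=
          Finset.abs_sum_le_sum_abs _ _
        have h2 : ∑ j ∈ S, |A r j * δ| ≤ ∑ j ∈ S, δ := by
          apply Finset.sum_le_sum
          intro j _
          rw [abs_mul, abs_of_pos hδpos]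
          have := hA r j
          have habs : |A r j| ≤ 1 := abs_le.mpr ⟨this.1, this.2⟩
          nlinarith
        have h3 : (∑ j ∈ S, δ) = l1 * δ := by
          rw [Finset.sum_const, hScard, nsmul_eq_mul]
        have h4 : (l1 : ℝ) * δ = c / 2 := by
          rw [hδ]
          field_simp
        have h5 : c / 2 < c := by linarith
        calc |∑ j ∈ S, A r j * δ| ≤ ∑ j ∈ S, δ := le_trans h1 h2
          _ = c / 2 := by rw [h3, h4]
          _ < c := h5
          _ ≤ |A.mulVec x1 r| := hcle r hrR
      simp only [signVec]
      rw [hmul2, sign_add_of_abs_lt hb]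
end

section
/- Let k be a positive integer, η ≥ 1 a real number, and 0 < ε < 1/2 such that 2εk is a positive integer. Let x, y ∈ ℝ^n be vectors with ‖x‖₂ = ‖y‖₂ = 1, ‖x‖₀ = ‖y‖₀ = k, κ(x) ≤ η, κ(y) ≤ η, and |supp(x) ∩ supp(y)| ≤ k(1−2ε). Then ‖x − y‖₂ ≥ 2√ε / η. -/
/-- The Euclidean norm of a vector in `Fin n → ℝ`. -/
noncomputable def euclNorm {n : ℕ} (x : Fin n → ℝ) : ℝ := Real.sqrt (∑ i, x i ^ 2)

/-- The dynamic range of `x` is at most `η`: the ratio of magnitudes of any two nonzero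
entries of `x` is at most `η`. -/
def DynRangeLE {n : ℕ} (x : Fin n → ℝ) (η : ℝ) : Prop :=
  ∀ i j : Fin n, x i ≠ 0 → x j ≠ 0 → |x i| ≤ η * |x j|

lemma entry_sq_lb {n : ℕ} {x : Fin n → ℝ} {η : ℝ} (hη0 : 0 < η)
    (hκ : DynRangeLE x η) (hsum : ∑ i, x i ^ 2 = 1) {i : Fin n} (hi : x i ≠ 0) :
    1 ≤ ((suppF x).card : ℝ) * (η ^ 2 * x i ^ 2) := by
  have hbound : ∀ j : Fin n, x j ^ 2 ≤ η ^ 2 * x i ^ 2 := by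
    intro j
    by_cases hj : x j = 0
    · simp [hj]; positivity
    · have h := hκ j i hj hi
      have h1 : |x j| ^ 2 ≤ (η * |x i|) ^ 2 :=
        pow_le_pow_left₀ (abs_nonneg _) h 2
      calc x j ^ 2 = |x j| ^ 2 := (sq_abs _).symm
        _ ≤ (η * |x i|) ^ 2 := h1
        _ = η ^ 2 * x i ^ 2 := by rw [mul_pow, sq_abs]
  have hsupp : ∑ j, x j ^ 2 = ∑ j ∈ suppF x, x j ^ 2 := by
    rw [eq_comm]
    apply Finset.sum_subset (Finset.subset_univ _)
    intro j _ hj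
    simp only [suppF, Finset.mem_filter, Finset.mem_univ, true_and, not_not] at hj
    simp [hj]
  have hle : ∑ j ∈ suppF x, x j ^ 2 ≤ (suppF x).card • (η ^ 2 * x i ^ 2) :=
    Finset.sum_le_card_nsmul _ _ _ (fun j _ => hbound j)
  rw [nsmul_eq_mul] at hle
  linarith [hsum ▸ hsupp ▸ hle]

/-- Two unit-norm `k`-sparse vectors with dynamic range at most `η` whose supports intersect
in at most `k(1-2ε)` coordinates are at Euclidean distance at least `2√ε/η`. Here `2εk` is a
positive integer and `0 < ε < 1/2`. -/
theorem separation_lower_bound (n k : ℕ) (hk : 0 < k) (η ε : ℝ) (hη : 1 ≤ η)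
    (hε0 : 0 < ε) (hε : ε < 1 / 2) (h2εk : ∃ j : ℕ, 0 < j ∧ (j : ℝ) = 2 * ε * k)
    (x y : Fin n → ℝ) (hx2 : euclNorm x = 1) (hy2 : euclNorm y = 1)
    (hx0 : (suppF x).card = k) (hy0 : (suppF y).card = k)
    (hκx : DynRangeLE x η) (hκy : DynRangeLE y η)
    (hint : ((suppF x ∩ suppF y).card : ℝ) ≤ (k : ℝ) * (1 - 2 * ε)) :
    2 * Real.sqrt ε / η ≤ euclNorm (x - y) := by
  have hη0 : (0:ℝ) < η := lt_of_lt_of_le one_pos hη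
  have hk0 : (0:ℝ) < (k:ℝ) := by exact_mod_cast hk
  -- sums of squares are 1
  have hxsum : ∑ i, x i ^ 2 = 1 := by
    have h := hx2; unfold euclNorm at h
    have h2 : (0:ℝ) ≤ ∑ i, x i ^ 2 := by positivity
    nlinarith [Real.sq_sqrt h2]
  have hysum : ∑ i, y i ^ 2 = 1 := by
    have h := hy2; unfold euclNorm at h
    have h2 : (0:ℝ) ≤ ∑ i, y i ^ 2 := by positivity
    nlinarith [Real.sq_sqrt h2]
  set S := suppF x with hS
  set T := suppF y with hT
  -- entrywise lower bounds
  have hxlb : ∀ i ∈ S \ T, 1 / ((k:ℝ) * η ^ 2) ≤ (x i - y i) ^ 2 := by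
    intro i hi
    simp only [hS, hT, Finset.mem_sdiff, suppF, Finset.mem_filter, Finset.mem_univ,
      true_and, not_not] at hi
    obtain ⟨hxi, hyi⟩ := hi
    have h1 := entry_sq_lb hη0 hκx hxsum hxi
    rw [hx0] at h1
    rw [hyi, sub_zero]
    rw [div_le_iff₀ (by positivity)]
    nlinarith
  have hylb : ∀ i ∈ T \ S, 1 / ((k:ℝ) * η ^ 2) ≤ (x i - y i) ^ 2 := by
    intro i hi
    simp only [hS, hT, Finset.mem_sdiff, suppF, Finset.mem_filter, Finset.mem_univ,
      true_and, not_not] at hi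
    obtain ⟨hyi, hxi⟩ := hi
    have h1 := entry_sq_lb hη0 hκy hysum hyi
    rw [hy0] at h1
    rw [hxi, zero_sub]
    rw [div_le_iff₀ (by positivity)]
    nlinarith
  -- cardinalities
  have hcAB : (((S \ T) ∪ (T \ S)).card : ℝ) = (S \ T).card + (T \ S).card := by
    rw [Finset.card_union_of_disjoint (disjoint_sdiff_sdiff)]
    push_cast; ring
  have hcardST : ((S \ T).card : ℝ) = (k:ℝ) - ((S ∩ T).card : ℝ) := by
    have := Finset.card_sdiff_add_card_inter S T
    have hle : (S ∩ T).card ≤ k := hx0 ▸ Finset.card_le_card (Finset.inter_subset_left)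
    rw [← hx0]
    push_cast [← this]
    ring
  have hcardTS : ((T \ S).card : ℝ) = (k:ℝ) - ((S ∩ T).card : ℝ) := by
    have := Finset.card_sdiff_add_card_inter T S
    rw [Finset.inter_comm] at this
    rw [← hy0]
    push_cast [← this]
    ring
  -- lower bound on sum over symmetric difference
  have hsub : ∑ i ∈ (S \ T) ∪ (T \ S), (x i - y i) ^ 2 ≤ ∑ i, (x i - y i) ^ 2 :=
    Finset.sum_le_sum_of_subset_of_nonneg (Finset.subset_univ _)
      (fun i _ _ => by positivity)
  have hsplit : ∑ i ∈ (S \ T) ∪ (T \ S), (x i - y i) ^ 2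
      = ∑ i ∈ S \ T, (x i - y i) ^ 2 + ∑ i ∈ T \ S, (x i - y i) ^ 2 :=
    Finset.sum_union (disjoint_sdiff_sdiff)
  have hA : ((S \ T).card : ℝ) * (1 / ((k:ℝ) * η ^ 2)) ≤ ∑ i ∈ S \ T, (x i - y i) ^ 2 := by
    have := Finset.card_nsmul_le_sum (S \ T) (fun i => (x i - y i) ^ 2) _ hxlb
    rwa [nsmul_eq_mul] at this
  have hB : ((T \ S).card : ℝ) * (1 / ((k:ℝ) * η ^ 2)) ≤ ∑ i ∈ T \ S, (x i - y i) ^ 2 := by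
    have := Finset.card_nsmul_le_sum (T \ S) (fun i => (x i - y i) ^ 2) _ hylb
    rwa [nsmul_eq_mul] at this
  have hcards : 4 * ε * (k:ℝ) ≤ ((S \ T).card : ℝ) + ((T \ S).card : ℝ) := by
    rw [hcardST, hcardTS]; nlinarith
  have hsum_lb : 4 * ε / η ^ 2 ≤ ∑ i, (x i - y i) ^ 2 := by
    have h1 : 4 * ε * (k:ℝ) * (1 / ((k:ℝ) * η ^ 2)) ≤ ∑ i, (x i - y i) ^ 2 := by
      calc 4 * ε * (k:ℝ) * (1 / ((k:ℝ) * η ^ 2))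
          ≤ (((S \ T).card : ℝ) + ((T \ S).card : ℝ)) * (1 / ((k:ℝ) * η ^ 2)) := by
            apply mul_le_mul_of_nonneg_right hcards (by positivity)
        _ = ((S \ T).card : ℝ) * (1 / ((k:ℝ) * η ^ 2))
            + ((T \ S).card : ℝ) * (1 / ((k:ℝ) * η ^ 2)) := by ring
        _ ≤ ∑ i ∈ S \ T, (x i - y i) ^ 2 + ∑ i ∈ T \ S, (x i - y i) ^ 2 :=
            add_le_add hA hB
        _ = ∑ i ∈ (S \ T) ∪ (T \ S), (x i - y i) ^ 2 := hsplit.symm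
        _ ≤ ∑ i, (x i - y i) ^ 2 := hsub
    have heq : 4 * ε * (k:ℝ) * (1 / ((k:ℝ) * η ^ 2)) = 4 * ε / η ^ 2 := by
      field_simp
    linarith [heq ▸ h1]
  -- conclude
  unfold euclNorm
  have hpi : ∀ i, (x - y) i = x i - y i := fun i => rfl
  simp only [hpi]
  have hnn : 0 ≤ 2 * Real.sqrt ε / η := by positivity
  have hsq : (2 * Real.sqrt ε / η) ^ 2 ≤ ∑ i, (x i - y i) ^ 2 := by
    have : (2 * Real.sqrt ε / η) ^ 2 = 4 * ε / η ^ 2 := by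
      rw [div_pow, mul_pow, Real.sq_sqrt hε0.le]; ring
    linarith [this ▸ hsum_lb]
  calc 2 * Real.sqrt ε / η = Real.sqrt ((2 * Real.sqrt ε / η) ^ 2) :=
        (Real.sqrt_sq hnn).symm
    _ ≤ Real.sqrt (∑ i, (x i - y i) ^ 2) := Real.sqrt_le_sqrt hsq
end
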